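/- Let (V,⊗,I) be a symmetric monoidal closed category and (T,φ,η,μ) a symmetric monoidal monad on V. For every object X of V and every T-algebra (Y,y), the pointwise action p : T[X,Y] → [X,Y] is a T-algebra structure on the internal hom [X,Y]; that is, p ∘ η_{[X,Y]} = 1_{[X,Y]} and p ∘ μ_{[X,Y]} = p ∘ T(p). -/

import Mathlib

open CategoryTheory MonoidalCategory Limits

universe v u

/-- A symmetric monoidal monad on a symmetric monoidal category. -/
structure SymMonoidalMonadStr (C : Type u) [Category.{v} C] [MonoidalCategory C]
    [SymmetricCategory C] (T : Monad C) where
  φ : ∀ A B : C, T.obj A ⊗ T.obj B ⟶ T.obj (A ⊗ B)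
  ε : 𝟙_ C ⟶ T.obj (𝟙_ C)
  φ_natural : ∀ {A B A' B' : C} (f : A ⟶ A') (g : B ⟶ B'),
    (T.map f ⊗ₘ T.map g) ≫ φ A' B' = φ A B ≫ T.map (f ⊗ₘ g)
  φ_assoc : ∀ A B C' : C,
    (φ A B ⊗ₘ 𝟙 (T.obj C')) ≫ φ (A ⊗ B) C' ≫ T.map (α_ A B C').hom
      = (α_ (T.obj A) (T.obj B) (T.obj C')).hom ≫ (𝟙 (T.obj A) ⊗ₘ φ B C') ≫ φ A (B ⊗ C')
  φ_left_unit : ∀ A : C,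
    (λ_ (T.obj A)).hom = (ε ⊗ₘ 𝟙 (T.obj A)) ≫ φ (𝟙_ C) A ≫ T.map (λ_ A).hom
  φ_right_unit : ∀ A : C,
    (ρ_ (T.obj A)).hom = (𝟙 (T.obj A) ⊗ₘ ε) ≫ φ A (𝟙_ C) ≫ T.map (ρ_ A).hom
  φ_braided : ∀ A B : C,
    (β_ (T.obj A) (T.obj B)).hom ≫ φ B A = φ A B ≫ T.map (β_ A B).hom
  η_tensor : ∀ A B : C, (T.η.app A ⊗ₘ T.η.app B) ≫ φ A B = T.η.app (A ⊗ B)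
  η_unit : ε = T.η.app (𝟙_ C)
  μ_tensor : ∀ A B : C,
    φ (T.obj A) (T.obj B) ≫ T.map (φ A B) ≫ T.μ.app (A ⊗ B)
      = (T.μ.app A ⊗ₘ T.μ.app B) ≫ φ A B
  μ_unit : ε ≫ T.map ε ≫ T.μ.app (𝟙_ C) = ε

variable {V : Type u} [Category.{v} V] [MonoidalCategory V] [SymmetricCategory V]
  [MonoidalClosed V]

/-- The right evaluation `[X,Y] ⊗ X ⟶ Y` associated to the internal hom. -/
noncomputable def rev (X Y : V) : (ihom X).obj Y ⊗ X ⟶ Y :=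
  (β_ ((ihom X).obj Y) X).hom ≫ (ihom.ev X).app Y

/-- The adjunct `Z ⟶ [X,Y]` of a morphism `Z ⊗ X ⟶ Y` with respect to right
evaluation: it is the unique map `h` with `(h ⊗ 𝟙) ≫ rev X Y = g`. -/
noncomputable def radj {Z X Y : V} (g : Z ⊗ X ⟶ Y) : Z ⟶ (ihom X).obj Y :=
  MonoidalClosed.curry ((β_ X Z).hom ≫ g)

/-- The pointwise `T`-action on the internal hom `[X,Y]`, for `X` an object of `V` and
`y : TY ⟶ Y` a `T`-algebra structure: the adjunct of
`y ∘ T(rev) ∘ φ ∘ (1 ⊗ η_X) : T[X,Y] ⊗ X ⟶ Y`. -/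
noncomputable def ptAct (T : Monad V) (M : SymMonoidalMonadStr V T) (X Y : V)
    (y : T.obj Y ⟶ Y) : T.obj ((ihom X).obj Y) ⟶ (ihom X).obj Y :=
  radj ((𝟙 (T.obj ((ihom X).obj Y)) ⊗ₘ T.η.app X) ≫ M.φ ((ihom X).obj Y) X
    ≫ T.map (rev X Y) ≫ y)

/-!
Transposing along `- ⊗ X ⊣ [X, -]`, the pointwise action becomes `f ↦ st ≫ T f ≫ y` applied to
evaluation, where `st = (1 ⊗ η) ≫ φ : TA ⊗ X ⟶ T(A ⊗ X)` is the strength of `T`. Because `φ` is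
monoidal for `η` and `μ`, the strength satisfies `(η ⊗ 1) ≫ st = η` and
`(μ ⊗ 1) ≫ st = st ≫ T st ≫ μ`, so `f ↦ st ≫ T f ≫ y` inherits the unit and associativity laws of
`y`; transposing back gives the two algebra laws for the pointwise action.
-/

namespace SymMonoidalMonadStr

variable {C : Type u} [Category.{v} C] [MonoidalCategory C] [SymmetricCategory C]
  {T : Monad C} (M : SymMonoidalMonadStr C T)

noncomputable def strength (A X : C) : T.obj A ⊗ X ⟶ T.obj (A ⊗ X) :=
  T.obj A ◁ T.η.app X ≫ M.φ A X

lemma φ_natural_left {A A' : C} (f : A ⟶ A') (B : C) :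
    T.map f ▷ T.obj B ≫ M.φ A' B = M.φ A B ≫ T.map (f ▷ B) := by
  simpa using M.φ_natural f (𝟙 B)

lemma φ_natural_right (A : C) {B B' : C} (g : B ⟶ B') :
    T.obj A ◁ T.map g ≫ M.φ A B' = M.φ A B ≫ T.map (A ◁ g) := by
  simpa using M.φ_natural (𝟙 A) g

lemma whiskerRight_map_strength {A A' : C} (f : A ⟶ A') (X : C) :
    T.map f ▷ X ≫ M.strength A' X = M.strength A X ≫ T.map (f ▷ X) := by
  rw [strength, ← whisker_exchange_assoc, φ_natural_left, strength, Category.assoc]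

lemma whiskerRight_η_strength (A X : C) :
    T.η.app A ▷ X ≫ M.strength A X = T.η.app (A ⊗ X) := by
  rw [strength, ← M.η_tensor, MonoidalCategory.tensorHom_def, Category.assoc]
  rfl

lemma whiskerRight_μ_strength (A X : C) :
    T.μ.app A ▷ X ≫ M.strength A X =
      M.strength (T.obj A) X ≫ T.map (M.strength A X) ≫ T.μ.app (A ⊗ X) := by
  -- writing `η_X = η_X ≫ T η_X ≫ μ_X` (right unit law) puts `μ ⊗ μ` in place for `μ_tensor`
  calc T.μ.app A ▷ X ≫ M.strength A X
      = (T.obj (T.obj A) ◁ (T.η.app X ≫ T.map (T.η.app X)) ≫ (T.μ.app A ⊗ₘ T.μ.app X))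
          ≫ M.φ A X := by
        rw [tensorHom_def', Category.assoc, Category.assoc, ← whiskerLeft_comp_assoc,
          Category.assoc, T.right_unit]
        dsimp only [Functor.id_obj]
        rw [Category.comp_id, strength, ← whisker_exchange_assoc]
        rfl
    _ = _ := by
        rw [Category.assoc, ← M.μ_tensor, strength, strength, Functor.map_comp,
          whiskerLeft_comp_assoc, reassoc_of% φ_natural_right, Category.assoc, Category.assoc]

noncomputable def extend (Y : T.Algebra) {A X : C} (f : A ⊗ X ⟶ Y.A) : T.obj A ⊗ X ⟶ Y.A :=
  M.strength A X ≫ T.map f ≫ Y.a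

variable (Y : T.Algebra) {A X : C} (f : A ⊗ X ⟶ Y.A)

lemma whiskerRight_map_extend {A' : C} (g : A' ⟶ A) :
    T.map g ▷ X ≫ M.extend Y f = M.extend Y (g ▷ X ≫ f) := by
  rw [extend, reassoc_of% (M.whiskerRight_map_strength g X), extend, Functor.map_comp_assoc]

lemma whiskerRight_η_extend : T.η.app A ▷ X ≫ M.extend Y f = f := by
  rw [extend, reassoc_of% (M.whiskerRight_η_strength A X), ← T.η.naturality_assoc, Y.unit]
  exact Category.comp_id f

lemma whiskerRight_μ_extend :
    T.μ.app A ▷ X ≫ M.extend Y f = M.extend Y (M.extend Y f) := by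
  rw [extend, reassoc_of% (M.whiskerRight_μ_strength A X), ← T.μ.naturality_assoc, Y.assoc]
  simp only [extend, Functor.map_comp, Category.assoc]
  rfl

end SymMonoidalMonadStr

section radj

variable {Z Z' X Y : V}

lemma comp_radj (h : Z' ⟶ Z) (g : Z ⊗ X ⟶ Y) : h ≫ radj g = radj (h ▷ X ≫ g) := by
  rw [radj, radj, ← MonoidalClosed.curry_natural_left,
    BraidedCategory.braiding_naturality_right_assoc]

lemma uncurry_eq_braiding_rev (h : Z ⟶ (ihom X).obj Y) :
    MonoidalClosed.uncurry h = (β_ X Z).hom ≫ h ▷ X ≫ rev X Y := by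
  rw [MonoidalClosed.uncurry_eq, rev, BraidedCategory.braiding_naturality_left_assoc,
    SymmetricCategory.symmetry_assoc]

lemma radj_eq_iff (g : Z ⊗ X ⟶ Y) (h : Z ⟶ (ihom X).obj Y) :
    radj g = h ↔ h ▷ X ≫ rev X Y = g := by
  rw [radj, MonoidalClosed.curry_eq_iff, uncurry_eq_braiding_rev, Iso.cancel_iso_hom_left]
  exact eq_comm

lemma whiskerRight_radj_rev (g : Z ⊗ X ⟶ Y) : radj g ▷ X ≫ rev X Y = g :=
  (radj_eq_iff g _).1 rfl

lemma radj_rev : radj (rev X Y) = 𝟙 _ :=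
  (radj_eq_iff _ _).2 (by rw [id_whiskerRight, Category.id_comp])

end radj

lemma ptAct_eq_radj_extend (T : Monad V) (M : SymMonoidalMonadStr V T) (X : V) (Y : T.Algebra) :
    ptAct T M X Y.A Y.a = radj (M.extend Y (rev X Y.A)) := by
  rw [ptAct, SymMonoidalMonadStr.extend, SymMonoidalMonadStr.strength, id_tensorHom,
    Category.assoc]

/-- the pointwise action on `[X,Y]` is a `T`-algebra structure. -/
theorem ptAct_isAlgebra (T : Monad V) (M : SymMonoidalMonadStr V T)
    (X : V) (Y : T.Algebra) :
    T.η.app ((ihom X).obj Y.A) ≫ ptAct T M X Y.A Y.a = 𝟙 ((ihom X).obj Y.A) ∧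
    T.μ.app ((ihom X).obj Y.A) ≫ ptAct T M X Y.A Y.a
      = T.map (ptAct T M X Y.A Y.a) ≫ ptAct T M X Y.A Y.a := by
  rw [ptAct_eq_radj_extend]
  constructor
  · rw [comp_radj, M.whiskerRight_η_extend, radj_rev]
  · rw [comp_radj, comp_radj, M.whiskerRight_μ_extend, M.whiskerRight_map_extend,
      whiskerRight_radj_rev]
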